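/- For all n ≥ 0, Σ_{j=0}^n q^{j^2} [n choose j]_q^2 = [2n choose n]_q. -/

import Mathlib

/-- The q-Pochhammer symbol `(a;q)_n`. -/
noncomputable def qPoch (a q : ℝ) (n : ℕ) : ℝ := ∏ j ∈ Finset.range n, (1 - q ^ j * a)

/-- The Gaussian (q-)binomial coefficient `[n choose k]_q`. -/
noncomputable def qbinom (q : ℝ) (n k : ℕ) : ℝ :=
  qPoch q q n / (qPoch q q k * qPoch q q (n - k))

/-!
Away from their junk values (`k > n`) the Gaussian binomials are the coefficients `qChoose`
generated by the q-Pascal rule, which holds for `qbinom` as soon as `q` is not a root of unity.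
These satisfy the q-Vandermonde identity
`[m + n, k] = ∑_{i + j = k} q^((m - i) j) [m, i] [n, j]`, by induction on `m` through q-Pascal.
For `m = n = k` the term with `j = n - i` is `q^(i²) [n, i] [n, n - i] = q^(i²) [n, i]²`
by the symmetry of `qbinom`.
-/

open Finset

/-- Unlike `qbinom`, this vanishes for `n < k`. -/
def qChoose {R : Type*} [CommSemiring R] (q : R) : ℕ → ℕ → R
  | _, 0 => 1
  | 0, _ + 1 => 0
  | n + 1, k + 1 => qChoose q n k + q ^ (k + 1) * qChoose q n (k + 1)

section qChoose

variable {R : Type*} [CommSemiring R] (q : R)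

@[simp]
theorem qChoose_zero_right (n : ℕ) : qChoose q n 0 = 1 := by
  cases n <;> rfl

theorem qChoose_succ_succ (n k : ℕ) :
    qChoose q (n + 1) (k + 1) = qChoose q n k + q ^ (k + 1) * qChoose q n (k + 1) := rfl

theorem qChoose_eq_zero_of_lt {n k : ℕ} (h : n < k) : qChoose q n k = 0 := by
  induction n generalizing k with
  | zero => obtain ⟨k, rfl⟩ := Nat.exists_eq_succ_of_ne_zero h.ne'; rfl
  | succ n ih =>
    obtain ⟨k, rfl⟩ := Nat.exists_eq_succ_of_ne_zero (Nat.ne_zero_of_lt h)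
    rw [qChoose_succ_succ, ih (by omega), ih (by omega), mul_zero, add_zero]

@[simp]
theorem qChoose_self (n : ℕ) : qChoose q n n = 1 := by
  induction n with
  | zero => rfl
  | succ n ih =>
    rw [qChoose_succ_succ, ih, qChoose_eq_zero_of_lt q n.lt_succ_self, mul_zero, add_zero]

/-- The truncated subtraction `m - (i + 1)` is harmless: when it truncates,
`qChoose q m (i + 1) = 0`. -/
theorem pow_mul_qChoose_succ (m i j : ℕ) :
    q ^ (i + j + 1) * (q ^ ((m - (i + 1)) * j) * qChoose q m (i + 1)) =
      q ^ ((m - i) * j) * (q ^ (i + 1) * qChoose q m (i + 1)) := by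
  rcases lt_or_ge m (i + 1) with hm | hm
  · simp only [qChoose_eq_zero_of_lt q hm, mul_zero]
  · obtain ⟨d, rfl⟩ := Nat.exists_eq_add_of_le hm
    rw [show i + 1 + d - (i + 1) = d by omega, show i + 1 + d - i = d + 1 by omega]
    ring

theorem qChoose_add (m n k : ℕ) :
    qChoose q (m + n) k =
      ∑ p ∈ antidiagonal k, q ^ ((m - p.1) * p.2) * qChoose q m p.1 * qChoose q n p.2 := by
  induction m generalizing k with
  | zero =>
    rw [sum_eq_single_of_mem (0, k) (mem_antidiagonal.2 (zero_add k))]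
    · simp
    · rintro ⟨_ | i, j⟩ hp hne
      · simp_all
      · rw [qChoose_eq_zero_of_lt q i.succ_pos, mul_zero, zero_mul]
  | succ m ih =>
    cases k with
    | zero => simp
    | succ k =>
      rw [Nat.add_right_comm, qChoose_succ_succ, ih, ih, Nat.sum_antidiagonal_succ,
        Nat.sum_antidiagonal_succ]
      simp only [Nat.add_sub_add_right, Nat.sub_zero, qChoose_zero_right, qChoose_succ_succ,
        mul_one, one_mul, add_mul, mul_add, sum_add_distrib, mul_sum]
      have shift : ∀ p ∈ antidiagonal k,
          q ^ (k + 1) * (q ^ ((m - (p.1 + 1)) * p.2) * qChoose q m (p.1 + 1) * qChoose q n p.2) =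
            q ^ ((m - p.1) * p.2) * (q ^ (p.1 + 1) * qChoose q m (p.1 + 1)) * qChoose q n p.2 := by
        rintro ⟨i, j⟩ hp
        rw [← mem_antidiagonal.1 hp, ← pow_mul_qChoose_succ]
        ring
      rw [sum_congr rfl shift]
      ring

end qChoose

theorem qPoch_zero (a q : ℝ) : qPoch a q 0 = 1 := prod_range_zero _

theorem qPoch_succ (a q : ℝ) (n : ℕ) : qPoch a q (n + 1) = qPoch a q n * (1 - q ^ n * a) :=
  prod_range_succ _ n

theorem qbinom_symm (q : ℝ) {n k : ℕ} (hk : k ≤ n) : qbinom q n (n - k) = qbinom q n k := by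
  rw [qbinom, qbinom, Nat.sub_sub_self hk, mul_comm]

section qbinom

variable {q : ℝ}

theorem qPoch_self_ne_zero (hq : ∀ m : ℕ, q ^ (m + 1) ≠ 1) (n : ℕ) : qPoch q q n ≠ 0 :=
  prod_ne_zero_iff.2 fun j _ ↦ sub_ne_zero.2 (by rw [← pow_succ]; exact (hq j).symm)

theorem qbinom_zero_right (hq : ∀ m : ℕ, q ^ (m + 1) ≠ 1) (n : ℕ) : qbinom q n 0 = 1 := by
  rw [qbinom, qPoch_zero, one_mul, Nat.sub_zero, div_self (qPoch_self_ne_zero hq n)]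

theorem qbinom_self (hq : ∀ m : ℕ, q ^ (m + 1) ≠ 1) (n : ℕ) : qbinom q n n = 1 := by
  rw [qbinom, Nat.sub_self, qPoch_zero, mul_one, div_self (qPoch_self_ne_zero hq n)]

theorem qbinom_succ_succ (hq : ∀ m : ℕ, q ^ (m + 1) ≠ 1) {n k : ℕ} (hk : k < n) :
    qbinom q (n + 1) (k + 1) = qbinom q n k + q ^ (k + 1) * qbinom q n (k + 1) := by
  obtain ⟨d, rfl⟩ := Nat.exists_eq_add_of_lt hk
  have hPk := qPoch_self_ne_zero hq k
  have hPd := qPoch_self_ne_zero hq d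
  have hk1 := sub_ne_zero.2 (hq k).symm
  have hd1 := sub_ne_zero.2 (hq d).symm
  simp only [qbinom, show k + d + 1 + 1 - (k + 1) = d + 1 by omega,
    show k + d + 1 - k = d + 1 by omega, show k + d + 1 - (k + 1) = d by omega, qPoch_succ,
    ← pow_succ]
  field_simp
  ring

theorem qbinom_eq_qChoose (hq : ∀ m : ℕ, q ^ (m + 1) ≠ 1) {n k : ℕ} (hk : k ≤ n) :
    qbinom q n k = qChoose q n k := by
  induction n generalizing k with
  | zero => rw [Nat.le_zero.1 hk, qbinom_zero_right hq, qChoose_zero_right]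
  | succ n ih =>
    cases k with
    | zero => rw [qbinom_zero_right hq, qChoose_zero_right]
    | succ k =>
      rcases hk.lt_or_eq with hlt | heq
      · rw [qbinom_succ_succ hq (by omega), qChoose_succ_succ, ih (by omega), ih (by omega)]
      · rw [heq, qbinom_self hq, qChoose_self]

end qbinom

theorem q_vandermonde_central (q : ℝ) (hq0 : 0 < q) (hq1 : q < 1) :
    ∀ n : ℕ, ∑ j ∈ Finset.range (n + 1), q ^ (j ^ 2) * (qbinom q n j) ^ 2
      = qbinom q (2 * n) n := by
  intro n
  have hq : ∀ m : ℕ, q ^ (m + 1) ≠ 1 := fun m ↦ (pow_lt_one₀ hq0.le hq1 m.succ_ne_zero).ne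
  rw [two_mul, qbinom_eq_qChoose hq (Nat.le_add_left n n), qChoose_add,
    ← Nat.sum_antidiagonal_swap, Nat.sum_antidiagonal_eq_sum_range_succ_mk]
  refine sum_congr rfl fun j hj ↦ ?_
  have hj : j ≤ n := Nat.lt_succ_iff.1 (mem_range.1 hj)
  simp only [Prod.swap, Nat.sub_sub_self hj, ← qbinom_eq_qChoose hq hj,
    ← qbinom_eq_qChoose hq (Nat.sub_le n j), qbinom_symm q hj]
  ring
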